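/- Let q be an odd prime power. No set S ⊆ (𝔽_q*)³ of 6 vectors has a leftover structure under the coloring φ₃. -/
import Mathlib


open Finset

namespace EG

/-- The color set `C_d = DOT ⊔ ZERO ⊔ UP ⊔ DOWN`, where `DOT = 𝔽_q*` and
`ZERO`, `UP`, `DOWN` are copies of `{1,…,d} × 𝔽_q`. -/
inductive Color (d : ℕ) (F : Type) [Zero F] where
  | dot  : {a : F // a ≠ 0} → Color d F
  | zero : Fin d → F → Color d F
  | up   : Fin d → F → Color d F
  | down : Fin d → F → Color d F

variable {F : Type} [Field F] [Fintype F] [LinearOrder F] {d : ℕ} [NeZero d]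

/-- The standard dot product. -/
def dotp (x y : Fin d → F) : F := ∑ i, x i * y i

/-- Lexicographic order on vectors induced by the linear order on `F`. -/
def lexLt (x y : Fin d → F) : Prop :=
  ∃ i, (∀ j, j < i → x j = y j) ∧ x i < y i

/-- The first coordinate at which `x` and `y` differ. -/
noncomputable def firstDiff (x y : Fin d → F) : Fin d :=
  if h : (Finset.univ.filter fun i => x i ≠ y i).Nonempty then
    (Finset.univ.filter fun i => x i ≠ y i).min' h
  else ⟨0, Nat.pos_of_ne_zero (NeZero.ne d)⟩

/-- The Modified Dot Product coloring, defined for `x` lexicographically below `y`. -/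
noncomputable def phiAux (x y : Fin d → F) : Color d F :=
  if h0 : dotp x y = 0 then
    .zero (firstDiff x y) (x (firstDiff x y) + y (firstDiff x y))
  else if dotp x y = dotp x x then
    .up (firstDiff x y) (x (firstDiff x y) + y (firstDiff x y))
  else if dotp x y = dotp y y then
    .down (firstDiff x y) (x (firstDiff x y) + y (firstDiff x y))
  else .dot ⟨dotp x y, h0⟩

open scoped Classical in
/-- The Modified Dot Product coloring `φ_d`, as a symmetric function. -/
noncomputable def phi (x y : Fin d → F) : Color d F :=
  if lexLt x y then phiAux x y else phiAux y x

/-- Membership in `(𝔽_q*)^d`: all coordinates nonzero. -/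
def NZ (x : Fin d → F) : Prop := ∀ i, x i ≠ 0

/-- `T` contains a `t`-falling star under the coloring `f`. -/
def IsFallingStar (f : (Fin d → F) → (Fin d → F) → Color d F)
    (T : Set (Fin d → F)) (t : ℕ) : Prop :=
  ∃ s : Fin t → (Fin d → F), Function.Injective s ∧ (∀ i, s i ∈ T) ∧
    ∃ α : Fin t → Color d F, ∀ i j : Fin t, j < i → f (s i) (s j) = α i

/-- The set of colors appearing on edges inside `A`. -/
def colorsOn {V C : Type} (f : V → V → C) (A : Finset V) : Set C :=
  {c | ∃ a ∈ A, ∃ b ∈ A, a ≠ b ∧ f a b = c}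

/-- `S` has a leftover structure under the edge-coloring `f`. -/
inductive Leftover {V C : Type} [DecidableEq V] (f : V → V → C) : Finset V → Prop
  | single (v : V) : Leftover f {v}
  | split (A B : Finset V) (α : C)
      (hA : Leftover f A) (hB : Leftover f B) (hdisj : Disjoint A B)
      (hcolors : colorsOn f A ∩ colorsOn f B = ∅)
      (hcross : ∀ a ∈ A, ∀ b ∈ B, f a b = α ∧ f b a = α)
      (hαA : α ∉ colorsOn f A) (hαB : α ∉ colorsOn f B) :
      Leftover f (A ∪ B)

section Basic

lemma dotp_comm (x y : Fin d → F) : dotp x y = dotp y x := by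
  unfold dotp; exact Finset.sum_congr rfl fun i _ => mul_comm _ _

lemma firstDiff_comm (x y : Fin d → F) : firstDiff x y = firstDiff y x := by
  have h : (Finset.univ.filter fun i => x i ≠ y i)
      = (Finset.univ.filter fun i => y i ≠ x i) := by
    ext i; simp [ne_comm]
  unfold firstDiff
  rw [h]

lemma firstDiff_spec (x y : Fin d → F) (h : x ≠ y) :
    x (firstDiff x y) ≠ y (firstDiff x y) ∧ ∀ j, j < firstDiff x y → x j = y j := by
  have hne : (Finset.univ.filter fun i => x i ≠ y i).Nonempty := by
    rcases Function.ne_iff.mp h with ⟨i, hi⟩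
    exact ⟨i, by simp [hi]⟩
  unfold firstDiff
  rw [dif_pos hne]
  constructor
  · have := Finset.min'_mem _ hne
    simpa using this
  · intro j hj
    by_contra hxj
    exact absurd (Finset.min'_le _ j (by simp [hxj])) (not_le.mpr hj)

lemma lexLt_asymm {x y : Fin d → F} (h1 : lexLt x y) (h2 : lexLt y x) : False := by
  obtain ⟨i, hi, hlt⟩ := h1
  obtain ⟨i', hi', hlt'⟩ := h2
  rcases lt_trichotomy i i' with h | h | h
  · exact absurd (hi' i h) (ne_of_gt hlt)
  · subst h; exact absurd hlt (asymm hlt')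
  · exact absurd (hi i' h) (ne_of_gt hlt')

lemma lexLt_total {x y : Fin d → F} (h : x ≠ y) : lexLt x y ∨ lexLt y x := by
  obtain ⟨hne, hagree⟩ := firstDiff_spec x y h
  rcases lt_or_gt_of_ne hne with hlt | hgt
  · exact Or.inl ⟨_, hagree, hlt⟩
  · exact Or.inr ⟨_, fun j hj => (hagree j hj).symm, hgt⟩

lemma lexLt_coord {x y : Fin d → F} {i : Fin d} (h : lexLt x y)
    (hagree : ∀ j, j < i → x j = y j) (hne : x i ≠ y i) : x i < y i := by
  obtain ⟨i', hi', hlt'⟩ := h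
  rcases lt_trichotomy i i' with hc | hc | hc
  · exact absurd (hi' i hc) hne
  · subst hc; exact hlt'
  · exact absurd (hagree i' hc) (ne_of_lt hlt')

lemma phi_comm {x y : Fin d → F} (h : x ≠ y) : phi x y = phi y x := by
  unfold phi
  split_ifs with h1 h2 h2
  · exact absurd h2 fun h2 => lexLt_asymm h1 h2
  · rfl
  · rfl
  · rcases lexLt_total h with h3 | h3
    · exact absurd h3 h1
    · exact absurd h3 h2

end Basic
set_option linter.unusedSectionVars false

section Pair

lemma aux_dot {x y : Fin d → F} {c : {a : F // a ≠ 0}} (h : phiAux x y = .dot c) :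
    dotp x y = c.1 ∧ dotp x y ≠ 0 ∧ dotp x y ≠ dotp x x ∧ dotp x y ≠ dotp y y := by
  unfold phiAux at h
  split_ifs at h with h0 h1 h2
  have h3 := Color.dot.inj h
  rw [← h3]
  exact ⟨rfl, h0, h1, h2⟩

lemma aux_zero {x y : Fin d → F} {i : Fin d} {a : F} (h : phiAux x y = .zero i a) :
    dotp x y = 0 ∧ firstDiff x y = i ∧ x (firstDiff x y) + y (firstDiff x y) = a := by
  unfold phiAux at h
  split_ifs at h with h0 h1 h2
  obtain ⟨h1, h2⟩ := Color.zero.inj h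
  exact ⟨h0, h1, h2⟩

lemma aux_up {x y : Fin d → F} {i : Fin d} {a : F} (h : phiAux x y = .up i a) :
    dotp x y ≠ 0 ∧ dotp x y = dotp x x ∧ firstDiff x y = i ∧
      x (firstDiff x y) + y (firstDiff x y) = a := by
  unfold phiAux at h
  split_ifs at h with h0 h1 h2
  obtain ⟨ha, hb⟩ := Color.up.inj h
  exact ⟨h0, h1, ha, hb⟩

lemma aux_down {x y : Fin d → F} {i : Fin d} {a : F} (h : phiAux x y = .down i a) :
    dotp x y ≠ 0 ∧ dotp x y ≠ dotp x x ∧ dotp x y = dotp y y ∧ firstDiff x y = i ∧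
      x (firstDiff x y) + y (firstDiff x y) = a := by
  unfold phiAux at h
  split_ifs at h with h0 h1 h2
  obtain ⟨ha, hb⟩ := Color.down.inj h
  exact ⟨h0, h1, h2, ha, hb⟩

/-- Coordinate facts attached to a non-dot color. -/
def NDC (x y : Fin d → F) (i : Fin d) (a : F) : Prop :=
  x i ≠ y i ∧ (∀ j, j < i → x j = y j) ∧ x i + y i = a

lemma ndc_of_fd {x y : Fin d → F} {i : Fin d} {a : F} (hxy : x ≠ y)
    (hfd : firstDiff x y = i) (ha : x (firstDiff x y) + y (firstDiff x y) = a) :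
    NDC x y i a := by
  obtain ⟨h1, h2⟩ := firstDiff_spec x y hxy
  subst hfd
  exact ⟨h1, h2, ha⟩

lemma NDC.symm {x y : Fin d → F} {i : Fin d} {a : F} (h : NDC x y i a) : NDC y x i a :=
  ⟨fun he => h.1 he.symm, fun j hj => (h.2.1 j hj).symm, by rw [add_comm]; exact h.2.2⟩

lemma phi_dot {x y : Fin d → F} {c : {a : F // a ≠ 0}} (h : phi x y = .dot c) :
    dotp x y = c.1 ∧ dotp x y ≠ 0 ∧ dotp x y ≠ dotp x x ∧ dotp x y ≠ dotp y y := by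
  unfold phi at h
  split_ifs at h with h1
  · exact aux_dot h
  · obtain ⟨ha, hb, hc, hd⟩ := aux_dot h
    rw [dotp_comm y x] at ha hb hc hd
    exact ⟨ha, hb, hd, hc⟩

lemma phi_zero {x y : Fin d → F} {i : Fin d} {a : F} (hxy : x ≠ y)
    (h : phi x y = .zero i a) : dotp x y = 0 ∧ NDC x y i a := by
  unfold phi at h
  split_ifs at h with h1
  · obtain ⟨ha, hb, hc⟩ := aux_zero h
    exact ⟨ha, ndc_of_fd hxy hb hc⟩
  · obtain ⟨ha, hb, hc⟩ := aux_zero h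
    rw [dotp_comm y x] at ha
    exact ⟨ha, (ndc_of_fd (Ne.symm hxy) hb hc).symm⟩

lemma phi_up {x y : Fin d → F} {i : Fin d} {a : F} (hxy : x ≠ y)
    (h : phi x y = .up i a) :
    NDC x y i a ∧ dotp x y ≠ 0 ∧ (x i < y i → dotp x y = dotp x x) ∧
      (y i < x i → dotp x y = dotp y y) := by
  unfold phi at h
  split_ifs at h with h1
  · obtain ⟨h0, hD, hfd, ha⟩ := aux_up h
    have hndc := ndc_of_fd hxy hfd ha
    have hlt : x i < y i := lexLt_coord h1 hndc.2.1 hndc.1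
    exact ⟨hndc, h0, fun _ => hD, fun h' => absurd hlt (asymm h')⟩
  · obtain ⟨h0, hD, hfd, ha⟩ := aux_up h
    have hndc := (ndc_of_fd (Ne.symm hxy) hfd ha).symm
    have h2 : lexLt y x := (lexLt_total hxy).resolve_left h1
    have hlt : y i < x i := lexLt_coord h2 (fun j hj => (hndc.2.1 j hj).symm)
      (fun he => hndc.1 he.symm)
    rw [dotp_comm y x] at h0 hD
    exact ⟨hndc, h0, fun h' => absurd hlt (asymm h'), fun _ => hD⟩

lemma phi_down {x y : Fin d → F} {i : Fin d} {a : F} (hxy : x ≠ y)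
    (h : phi x y = .down i a) :
    NDC x y i a ∧ dotp x y ≠ 0 ∧ (x i < y i → dotp x y = dotp y y) ∧
      (y i < x i → dotp x y = dotp x x) := by
  unfold phi at h
  split_ifs at h with h1
  · obtain ⟨h0, _, hD, hfd, ha⟩ := aux_down h
    have hndc := ndc_of_fd hxy hfd ha
    have hlt : x i < y i := lexLt_coord h1 hndc.2.1 hndc.1
    exact ⟨hndc, h0, fun _ => hD, fun h' => absurd hlt (asymm h')⟩
  · obtain ⟨h0, _, hD, hfd, ha⟩ := aux_down h
    have hndc := (ndc_of_fd (Ne.symm hxy) hfd ha).symm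
    have h2 : lexLt y x := (lexLt_total hxy).resolve_left h1
    have hlt : y i < x i := lexLt_coord h2 (fun j hj => (hndc.2.1 j hj).symm)
      (fun he => hndc.1 he.symm)
    rw [dotp_comm y x] at h0 hD
    exact ⟨hndc, h0, fun h' => absurd hlt (asymm h'), fun _ => hD⟩

end Pair
section Three

lemma dotp_eq (x y : Fin 3 → F) :
    dotp x y = x 0 * y 0 + x 1 * y 1 + x 2 * y 2 := by
  simp [dotp, Fin.sum_univ_three]

lemma funext3 {x y : Fin 3 → F} (h0 : x 0 = y 0) (h1 : x 1 = y 1) (h2 : x 2 = y 2) :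
    x = y := by
  funext j
  fin_cases j <;> assumption

lemma dotp_sub (x y z : Fin 3 → F) : dotp x (y - z) = dotp x y - dotp x z := by
  simp [dotp_eq]; ring

lemma dotp_smul (t : F) (x y : Fin 3 → F) : dotp x (t • y) = t * dotp x y := by
  simp [dotp_eq]; ring

lemma dotp_smul_left (t : F) (x y : Fin 3 → F) : dotp (t • x) y = t * dotp x y := by
  simp [dotp_eq]; ring

lemma leaves_agree {x y z : Fin 3 → F} {i : Fin 3} {a : F}
    (h1 : NDC x y i a) (h2 : NDC x z i a) : ∀ j, j ≤ i → y j = z j := by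
  intro j hj
  rcases eq_or_lt_of_le hj with rfl | hlt
  · have := h1.2.2
    have := h2.2.2
    have : x j + y j = x j + z j := by rw [h1.2.2, h2.2.2]
    exact add_left_cancel this
  · rw [← h1.2.1 j hlt, h2.2.1 j hlt]

/-- From two equal dot products to perpendicularity of the difference. -/
lemma perp_of_eq {x y z : Fin 3 → F} (h : dotp x y = dotp x z) : dotp x (y - z) = 0 := by
  rw [dotp_sub, h, sub_self]

/-- u NZ, u ⟂ w, w = (0,0,*), w ≠ 0 : contradiction. -/
lemma subC {u w : Fin 3 → F} (hNZ : NZ u) (h : dotp u w = 0)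
    (h0 : w 0 = 0) (h1 : w 1 = 0) (hw : w ≠ 0) : False := by
  have hw2 : w 2 ≠ 0 := fun h2 => hw (funext3 h0 h1 h2)
  rw [dotp_eq, h0, h1] at h
  have : u 2 * w 2 = 0 := by linear_combination h
  rcases mul_eq_zero.mp this with h' | h'
  · exact hNZ 2 h'
  · exact hw2 h'

/-- Collinearity contradiction: the center-leaf difference is proportional to the
leaf-leaf difference. -/
lemma subA {t1 t2 t3 : Fin 3 → F} {C : Color 3 F}
    (h12 : phi t1 t2 = C) (h13 : phi t1 t3 = C)
    (n12 : t1 ≠ t2) (n13 : t1 ≠ t3) (n23 : t2 ≠ t3)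
    (hprop : ∃ s : F, t1 - t2 = s • (t2 - t3)) : False := by
  obtain ⟨s, hs⟩ := hprop
  cases C with
  | dot c =>
    obtain ⟨hv2, _, hsq, _⟩ := phi_dot h12
    obtain ⟨hv3, _, _, _⟩ := phi_dot h13
    have hperp : dotp t1 (t2 - t3) = 0 := perp_of_eq (by rw [hv2, hv3])
    have : dotp t1 (t1 - t2) = 0 := by
      rw [hs, dotp_smul, hperp, mul_zero]
    rw [dotp_sub] at this
    exact hsq (by linear_combination -this)
  | zero i a =>
    obtain ⟨_, N2⟩ := phi_zero n12 h12
    obtain ⟨_, N3⟩ := phi_zero n13 h13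
    have hag := leaves_agree N2 N3 i le_rfl
    have : (t1 - t2) i = s * (t2 - t3) i := by rw [hs]; simp
    have hz : (t2 - t3) i = 0 := by simp [hag]
    rw [hz, mul_zero] at this
    exact N2.1 (by have := sub_eq_zero.mp this; simpa using this)
  | up i a =>
    obtain ⟨N2, _⟩ := phi_up n12 h12
    obtain ⟨N3, _⟩ := phi_up n13 h13
    have hag := leaves_agree N2 N3 i le_rfl
    have : (t1 - t2) i = s * (t2 - t3) i := by rw [hs]; simp
    have hz : (t2 - t3) i = 0 := by simp [hag]
    rw [hz, mul_zero] at this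
    exact N2.1 (by have := sub_eq_zero.mp this; simpa using this)
  | down i a =>
    obtain ⟨N2, _⟩ := phi_down n12 h12
    obtain ⟨N3, _⟩ := phi_down n13 h13
    have hag := leaves_agree N2 N3 i le_rfl
    have : (t1 - t2) i = s * (t2 - t3) i := by rw [hs]; simp
    have hz : (t2 - t3) i = 0 := by simp [hag]
    rw [hz, mul_zero] at this
    exact N2.1 (by have := sub_eq_zero.mp this; simpa using this)

/-- 2D determinant kill: u ⟂ v, w which have zero first coordinate and are 2D-independent. -/
lemma kill2 {u v w : Fin 3 → F} (hNZ : NZ u) (hv0 : v 0 = 0) (hw0 : w 0 = 0)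
    (huv : dotp u v = 0) (huw : dotp u w = 0)
    (hdet : v 1 * w 2 - v 2 * w 1 ≠ 0) : False := by
  rw [dotp_eq, hv0] at huv
  rw [dotp_eq, hw0] at huw
  have h1 : u 1 * (v 1 * w 2 - v 2 * w 1) = 0 := by
    linear_combination w 2 * huv - v 2 * huw
  rcases mul_eq_zero.mp h1 with h' | h'
  · exact hNZ 1 h'
  · exact hdet h'

/-- 2D proportionality: first coords vanish, det vanishes, w ≠ 0. -/
lemma prop2 {v w : Fin 3 → F} (hv0 : v 0 = 0) (hw0 : w 0 = 0)
    (hdet : v 1 * w 2 - v 2 * w 1 = 0) (hw : w ≠ 0) : ∃ s : F, v = s • w := by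
  by_cases h1 : w 1 ≠ 0
  · refine ⟨v 1 / w 1, funext3 ?_ ?_ ?_⟩
    · simp [hv0, hw0]
    · simp; field_simp
    · simp; field_simp; linear_combination -hdet
  · push_neg at h1
    have h2 : w 2 ≠ 0 := fun h2 => hw (funext3 hw0 h1 h2)
    refine ⟨v 2 / w 2, funext3 ?_ ?_ ?_⟩
    · simp [hv0, hw0]
    · have h3 : v 1 * w 2 = 0 := by linear_combination hdet + v 2 * h1
      have h4 := (mul_eq_zero.mp h3).resolve_right h2
      simp [h4, h1]
    · simp; field_simp

end Three
section Tools

/-- Cross product. -/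
def cp (v w : Fin 3 → F) : Fin 3 → F :=
  ![v 1 * w 2 - v 2 * w 1, v 2 * w 0 - v 0 * w 2, v 0 * w 1 - v 1 * w 0]

lemma cp0 (v w : Fin 3 → F) : cp v w 0 = v 1 * w 2 - v 2 * w 1 := rfl
lemma cp1 (v w : Fin 3 → F) : cp v w 1 = v 2 * w 0 - v 0 * w 2 := rfl
lemma cp2 (v w : Fin 3 → F) : cp v w 2 = v 0 * w 1 - v 1 * w 0 := rfl

lemma perp_cp {x v w : Fin 3 → F} (hv : dotp x v = 0) (hw : dotp x w = 0) :
    x 0 * cp v w 1 = x 1 * cp v w 0 ∧ x 0 * cp v w 2 = x 2 * cp v w 0 ∧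
      x 1 * cp v w 2 = x 2 * cp v w 1 := by
  rw [dotp_eq] at hv hw
  refine ⟨?_, ?_, ?_⟩ <;> simp only [cp0, cp1, cp2]
  · linear_combination (v 2) * hw - (w 2) * hv
  · linear_combination (w 1) * hv - (v 1) * hw
  · linear_combination (v 0) * hw - (w 0) * hv

lemma prop_of_cross_eq {x n : Fin 3 → F} (h01 : x 0 * n 1 = x 1 * n 0)
    (h02 : x 0 * n 2 = x 2 * n 0) (h12 : x 1 * n 2 = x 2 * n 1) (hn : n ≠ 0) :
    ∃ t : F, x = t • n := by
  have h : n 0 ≠ 0 ∨ n 1 ≠ 0 ∨ n 2 ≠ 0 := by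
    by_contra hc
    push_neg at hc
    exact hn (funext3 hc.1 hc.2.1 hc.2.2)
  rcases h with h | h | h
  · refine ⟨x 0 / n 0, funext3 ?_ ?_ ?_⟩ <;> simp <;> field_simp
    · linear_combination -h01
    · linear_combination -h02
  · refine ⟨x 1 / n 1, funext3 ?_ ?_ ?_⟩ <;> simp <;> field_simp
    · linear_combination h01
    · linear_combination -h12
  · refine ⟨x 2 / n 2, funext3 ?_ ?_ ?_⟩ <;> simp <;> field_simp
    · linear_combination h02
    · linear_combination h12

lemma star2_cases {x y z : Fin 3 → F} {C : Color 3 F} (hxy : x ≠ y) (hxz : x ≠ z)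
    (h1 : phi x y = C) (h2 : phi x z = C) :
    (dotp x y = dotp x z ∧ dotp x y ≠ 0 ∧ dotp x y ≠ dotp x x) ∨
      (∃ i a, NDC x y i a ∧ NDC x z i a) := by
  cases C with
  | dot c =>
    obtain ⟨v1, n1, s1, _⟩ := phi_dot h1
    obtain ⟨v2, _, _, _⟩ := phi_dot h2
    exact Or.inl ⟨v1.trans v2.symm, n1, s1⟩
  | zero i a => exact Or.inr ⟨i, a, (phi_zero hxy h1).2, (phi_zero hxz h2).2⟩
  | up i a => exact Or.inr ⟨i, a, (phi_up hxy h1).1, (phi_up hxz h2).1⟩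
  | down i a => exact Or.inr ⟨i, a, (phi_down hxy h1).1, (phi_down hxz h2).1⟩

lemma star3_cases {x y z w : Fin 3 → F} {C : Color 3 F} (hxy : x ≠ y) (hxz : x ≠ z)
    (hxw : x ≠ w) (h1 : phi x y = C) (h2 : phi x z = C) (h3 : phi x w = C) :
    (dotp x y = dotp x z ∧ dotp x y = dotp x w ∧ dotp x y ≠ 0 ∧ dotp x y ≠ dotp x x) ∨
      (∃ i a, NDC x y i a ∧ NDC x z i a ∧ NDC x w i a) := by
  cases C with
  | dot c =>
    obtain ⟨v1, n1, s1, _⟩ := phi_dot h1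
    obtain ⟨v2, _, _, _⟩ := phi_dot h2
    obtain ⟨v3, _, _, _⟩ := phi_dot h3
    exact Or.inl ⟨v1.trans v2.symm, v1.trans v3.symm, n1, s1⟩
  | zero i a =>
    exact Or.inr ⟨i, a, (phi_zero hxy h1).2, (phi_zero hxz h2).2, (phi_zero hxw h3).2⟩
  | up i a =>
    exact Or.inr ⟨i, a, (phi_up hxy h1).1, (phi_up hxz h2).1, (phi_up hxw h3).1⟩
  | down i a =>
    exact Or.inr ⟨i, a, (phi_down hxy h1).1, (phi_down hxz h2).1, (phi_down hxw h3).1⟩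

lemma star4_cases {x y z w v : Fin 3 → F} {C : Color 3 F} (hxy : x ≠ y) (hxz : x ≠ z)
    (hxw : x ≠ w) (hxv : x ≠ v)
    (h1 : phi x y = C) (h2 : phi x z = C) (h3 : phi x w = C) (h4 : phi x v = C) :
    (dotp x y = dotp x z ∧ dotp x y = dotp x w ∧ dotp x y = dotp x v ∧
        dotp x y ≠ 0 ∧ dotp x y ≠ dotp x x) ∨
      (∃ i a, NDC x y i a ∧ NDC x z i a ∧ NDC x w i a ∧ NDC x v i a) := by
  cases C with
  | dot c =>
    obtain ⟨v1, n1, s1, _⟩ := phi_dot h1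
    obtain ⟨v2, _, _, _⟩ := phi_dot h2
    obtain ⟨v3, _, _, _⟩ := phi_dot h3
    obtain ⟨v4, _, _, _⟩ := phi_dot h4
    exact Or.inl ⟨v1.trans v2.symm, v1.trans v3.symm, v1.trans v4.symm, n1, s1⟩
  | zero i a =>
    exact Or.inr ⟨i, a, (phi_zero hxy h1).2, (phi_zero hxz h2).2, (phi_zero hxw h3).2,
      (phi_zero hxv h4).2⟩
  | up i a =>
    exact Or.inr ⟨i, a, (phi_up hxy h1).1, (phi_up hxz h2).1, (phi_up hxw h3).1,
      (phi_up hxv h4).1⟩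
  | down i a =>
    exact Or.inr ⟨i, a, (phi_down hxy h1).1, (phi_down hxz h2).1, (phi_down hxw h3).1,
      (phi_down hxv h4).1⟩

/-- Center `u` perpendicular to both differences of a colored cherry `(t1; t2, t3)`
whose points share coordinate 0 : contradiction. -/
lemma subB {u t1 t2 t3 : Fin 3 → F} {C : Color 3 F} (hNZ : NZ u)
    (e23 : dotp u t2 = dotp u t3) (e12 : dotp u t1 = dotp u t2)
    (h023 : t2 0 = t3 0) (h012 : t1 0 = t2 0)
    (h12 : phi t1 t2 = C) (h13 : phi t1 t3 = C)
    (n12 : t1 ≠ t2) (n13 : t1 ≠ t3) (n23 : t2 ≠ t3) : False := by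
  have hv0 : (t2 - t3) 0 = 0 := by simp [h023]
  have hw0 : (t1 - t2) 0 = 0 := by simp [h012]
  have huv : dotp u (t2 - t3) = 0 := perp_of_eq e23
  have huw : dotp u (t1 - t2) = 0 := perp_of_eq e12
  by_cases hdet : (t2 - t3) 1 * (t1 - t2) 2 - (t2 - t3) 2 * (t1 - t2) 1 = 0
  · have hprop : ∃ s : F, t1 - t2 = s • (t2 - t3) :=
      prop2 hw0 hv0 (by linear_combination -hdet) (sub_ne_zero.mpr n23)
    exact subA h12 h13 n12 n13 n23 hprop
  · exact kill2 hNZ hv0 hw0 huv huw hdet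

end Tools
section K5

lemma K5 {s1 s2 s3 s4 s5 : Fin 3 → F} {C5 C4 C3 : Color 3 F}
    (N3 : NZ s3) (N4 : NZ s4) (N5 : NZ s5)
    (n12 : s1 ≠ s2) (n31 : s3 ≠ s1) (n32 : s3 ≠ s2)
    (n41 : s4 ≠ s1) (n42 : s4 ≠ s2) (n43 : s4 ≠ s3)
    (n51 : s5 ≠ s1) (n52 : s5 ≠ s2) (n53 : s5 ≠ s3) (n54 : s5 ≠ s4)
    (h51 : phi s5 s1 = C5) (h52 : phi s5 s2 = C5) (h53 : phi s5 s3 = C5)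
    (h54 : phi s5 s4 = C5)
    (h41 : phi s4 s1 = C4) (h42 : phi s4 s2 = C4) (h43 : phi s4 s3 = C4)
    (h31 : phi s3 s1 = C3) (h32 : phi s3 s2 = C3) : False := by
  rcases star4_cases n51 n52 n53 n54 h51 h52 h53 h54 with
    ⟨E512, E513, E514, Hne5, Hsq5⟩ | ⟨i5, a5, M1, M2, M3, M4⟩
  · -- C5 is a dot color
    rcases star3_cases n41 n42 n43 h41 h42 h43 with
      ⟨E412, E413, Hne4, Hsq4⟩ | ⟨i4, a4, K1, K2, K3⟩
    · -- C4 is a dot color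
      have p5d : dotp s5 (s1 - s2) = 0 := perp_of_eq E512
      have p5e : dotp s5 (s1 - s3) = 0 := perp_of_eq E513
      have p4d : dotp s4 (s1 - s2) = 0 := perp_of_eq E412
      have p4e : dotp s4 (s1 - s3) = 0 := perp_of_eq E413
      by_cases hn0 : cp (s1 - s2) (s1 - s3) = 0
      · -- differences proportional : collinear case
        have c0 := congrFun hn0 0
        have c1 := congrFun hn0 1
        have c2 := congrFun hn0 2
        rw [cp0] at c0; rw [cp1] at c1; rw [cp2] at c2
        simp only [Pi.zero_apply] at c0 c1 c2
        obtain ⟨t, ht⟩ := prop_of_cross_eq (x := s1 - s3) (n := s1 - s2)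
          (by linear_combination -c2) (by linear_combination c1)
          (by linear_combination -c0) (sub_ne_zero.mpr n12)
        refine subA h31 h32 n31 n32 n12 ⟨-t, ?_⟩
        have hneg : s3 - s1 = -(s1 - s3) := by ring
        rw [hneg, ht, neg_smul]
      · obtain ⟨q01, q02, q12⟩ := perp_cp p4d p4e
        obtain ⟨r01, r02, r12⟩ := perp_cp p5d p5e
        obtain ⟨μ, hμ⟩ := prop_of_cross_eq q01 q02 q12 hn0
        obtain ⟨ν, hν⟩ := prop_of_cross_eq r01 r02 r12 hn0
        set n := cp (s1 - s2) (s1 - s3)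
        have hc4 : dotp s4 s1 = μ * dotp n s1 := by rw [hμ, dotp_smul_left]
        have hc5 : dotp s5 s1 = ν * dotp n s1 := by rw [hν, dotp_smul_left]
        have hc54 : dotp s5 s4 = ν * (μ * dotp n n) := by
          rw [hν, hμ, dotp_smul_left, dotp_smul]
        have hν0 : ν ≠ 0 := fun h' => Hne5 (by rw [hc5, h', zero_mul])
        have hns1 : dotp n s1 ≠ 0 := fun h' => Hne5 (by rw [hc5, h', mul_zero])
        have key : dotp n s1 = μ * dotp n n := by
          have h' := E514
          rw [hc5, hc54] at h'
          exact mul_left_cancel₀ hν0 h'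
        apply Hsq4
        rw [hc4, key, hμ, dotp_smul_left, dotp_smul]
    · -- C4 is a non-dot color with coordinate i4
      have A12 := leaves_agree K1 K2
      have A13 := leaves_agree K1 K3
      fin_cases i4
      · exact subB N5 E512 E513.symm (A12 0 (by decide)) (A13 0 (by decide)).symm
          h31 h32 n31 n32 n12
      · rcases star2_cases n31 n32 h31 h32 with ⟨E312, _, _⟩ | ⟨i3, a3, L1, L2⟩
        · exact subC N3 (perp_of_eq E312) (by simp [A12 0 (by decide)])
            (by simp [A12 1 (by decide)]) (sub_ne_zero.mpr n12)
        · fin_cases i3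
          · exact L1.1 (A13 0 (by decide)).symm
          · exact L1.1 (A13 1 (by decide)).symm
          · exact n12 (funext3 (leaves_agree L1 L2 0 (by decide))
              (leaves_agree L1 L2 1 (by decide)) (leaves_agree L1 L2 2 (by decide)))
      · exact n12 (funext3 (A12 0 (by decide)) (A12 1 (by decide)) (A12 2 (by decide)))
  · -- C5 is a non-dot color with coordinate i5
    have B12 := leaves_agree M1 M2
    have B13 := leaves_agree M1 M3
    have B14 := leaves_agree M1 M4
    fin_cases i5
    · rcases star3_cases n41 n42 n43 h41 h42 h43 with
        ⟨E412, E413, _, _⟩ | ⟨i4, a4, K1, K2, K3⟩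
      · exact subB N4 E412 E413.symm (B12 0 (by decide)) (B13 0 (by decide)).symm
          h31 h32 n31 n32 n12
      · have A12 := leaves_agree K1 K2
        have A13 := leaves_agree K1 K3
        fin_cases i4
        · exact K1.1 (B14 0 (by decide)).symm
        · rcases star2_cases n31 n32 h31 h32 with ⟨E312, _, _⟩ | ⟨i3, a3, L1, L2⟩
          · exact subC N3 (perp_of_eq E312) (by simp [A12 0 (by decide)])
              (by simp [A12 1 (by decide)]) (sub_ne_zero.mpr n12)
          · fin_cases i3
            · exact L1.1 (A13 0 (by decide)).symm
            · exact L1.1 (A13 1 (by decide)).symm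
            · exact n12 (funext3 (leaves_agree L1 L2 0 (by decide))
                (leaves_agree L1 L2 1 (by decide)) (leaves_agree L1 L2 2 (by decide)))
        · exact n12 (funext3 (A12 0 (by decide)) (A12 1 (by decide)) (A12 2 (by decide)))
    · rcases star3_cases n41 n42 n43 h41 h42 h43 with
        ⟨E412, _, _, _⟩ | ⟨i4, a4, K1, K2, K3⟩
      · exact subC N4 (perp_of_eq E412) (by simp [B12 0 (by decide)])
          (by simp [B12 1 (by decide)]) (sub_ne_zero.mpr n12)
      · have A12 := leaves_agree K1 K2
        fin_cases i4
        · exact K1.1 (B14 0 (by decide)).symm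
        · exact K1.1 (B14 1 (by decide)).symm
        · exact n12 (funext3 (A12 0 (by decide)) (A12 1 (by decide)) (A12 2 (by decide)))
    · exact n12 (funext3 (B12 0 (by decide)) (B12 1 (by decide)) (B12 2 (by decide)))

end K5
section Pi

lemma dotp_sub_left (x y z : Fin 3 → F) : dotp (x - y) z = dotp x z - dotp y z := by
  simp [dotp_eq]; ring

/-- `P`-type center: both differences of the cherry are perpendicular to `p`. -/
lemma PiP {p t1 t2 t3 : Fin 3 → F} {δC : Color 3 F} {i : Fin 3} (Np : NZ p)
    (E1 : dotp p t1 = dotp p t2) (E2 : dotp p t1 = dotp p t3)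
    (Ag12 : ∀ j, j ≤ i → t1 j = t2 j) (Ag13 : ∀ j, j ≤ i → t1 j = t3 j)
    (h12 : phi t1 t2 = δC) (h13 : phi t1 t3 = δC)
    (m12 : t1 ≠ t2) (m13 : t1 ≠ t3) (m23 : t2 ≠ t3) : False := by
  fin_cases i
  · exact subB Np (E1.symm.trans E2) E1
      ((Ag12 0 (by decide)).symm.trans (Ag13 0 (by decide))) (Ag12 0 (by decide))
      h12 h13 m12 m13 m23
  · refine subC Np (perp_of_eq (E1.symm.trans E2)) ?_ ?_ (sub_ne_zero.mpr m23)
    · simp [(Ag12 0 (by decide)).symm.trans (Ag13 0 (by decide))]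
    · simp [(Ag12 1 (by decide)).symm.trans (Ag13 1 (by decide))]
  · exact m12 (funext3 (Ag12 0 (by decide)) (Ag12 1 (by decide)) (Ag12 2 (by decide)))

/-- `Q`-type centers: both `p` and `r` satisfy `p·t = t·t` on the cherry. -/
lemma PiQ {p r t1 t2 t3 : Fin 3 → F} {δC : Color 3 F} {i : Fin 3}
    (N1 : NZ t1) (N2 : NZ t2) (hpr : p ≠ r)
    (AgPR : ∀ j, j ≤ i → p j = r j)
    (Q1p : dotp p t1 = dotp t1 t1) (Q2p : dotp p t2 = dotp t2 t2)
    (Q3p : dotp p t3 = dotp t3 t3)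
    (Q1r : dotp r t1 = dotp t1 t1) (Q2r : dotp r t2 = dotp t2 t2)
    (Q3r : dotp r t3 = dotp t3 t3)
    (Ag12 : ∀ j, j ≤ i → t1 j = t2 j) (Ag13 : ∀ j, j ≤ i → t1 j = t3 j)
    (h12 : phi t1 t2 = δC) (h13 : phi t1 t3 = δC)
    (m12 : t1 ≠ t2) (m13 : t1 ≠ t3) (m23 : t2 ≠ t3) : False := by
  have H1 : dotp t1 (p - r) = 0 := perp_of_eq (by
    rw [dotp_comm t1 p, dotp_comm t1 r, Q1p, Q1r])
  have H2 : dotp t2 (p - r) = 0 := perp_of_eq (by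
    rw [dotp_comm t2 p, dotp_comm t2 r, Q2p, Q2r])
  have H3 : dotp t3 (p - r) = 0 := perp_of_eq (by
    rw [dotp_comm t3 p, dotp_comm t3 r, Q3p, Q3r])
  fin_cases i
  · -- the hard case `i = 0`
    have hw0 : (p - r) 0 = 0 := by simp [AgPR 0 (by decide)]
    have E023 : t2 0 = t3 0 := (Ag12 0 (by decide)).symm.trans (Ag13 0 (by decide))
    have E012 : t1 0 = t2 0 := Ag12 0 (by decide)
    rcases star2_cases m12 m13 h12 h13 with ⟨E23, Hne, Hsq⟩ | ⟨iδ, aδ, L1, L2⟩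
    · -- δ is a dot color
      have hv0 : (t2 - t3) 0 = 0 := by simp [E023]
      by_cases hdet : (p - r) 1 * (t2 - t3) 2 - (p - r) 2 * (t2 - t3) 1 = 0
      · obtain ⟨s, hs⟩ := prop2 (v := t2 - t3) (w := p - r) hv0 hw0
          (by linear_combination -hdet) (sub_ne_zero.mpr hpr)
        have hB0 : dotp t2 (t2 - t3) = 0 := by rw [hs, dotp_smul, H2, mul_zero]
        have hC0 : dotp t3 (t2 - t3) = 0 := by rw [hs, dotp_smul, H3, mul_zero]
        have hA0 : dotp t1 (t2 - t3) = 0 := perp_of_eq E23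
        have hS0 : dotp (t2 - t3) (t2 - t3) = 0 := by
          rw [dotp_sub_left, hB0, hC0, sub_zero]
        rw [dotp_eq] at hA0 hB0 hS0
        simp only [Pi.sub_apply] at hA0 hB0 hS0
        have hA : t1 1 * (t2 1 - t3 1) + t1 2 * (t2 2 - t3 2) = 0 := by
          linear_combination hA0 - t1 0 * E023
        have hB : t2 1 * (t2 1 - t3 1) + t2 2 * (t2 2 - t3 2) = 0 := by
          linear_combination hB0 - t2 0 * E023
        have hS : (t2 1 - t3 1) * (t2 1 - t3 1) + (t2 2 - t3 2) * (t2 2 - t3 2) = 0 := by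
          linear_combination hS0 - (t2 0 - t3 0) * E023
        have hD1 : t2 1 - t3 1 ≠ 0 := by
          intro hz
          have hz2 : (t2 2 - t3 2) * (t2 2 - t3 2) = 0 := by
            linear_combination hS - (t2 1 - t3 1) * hz
          exact m23 (funext3 E023 (sub_eq_zero.mp hz) (sub_eq_zero.mp (mul_self_eq_zero.mp hz2)))
        have key : (dotp t1 t2 - dotp t1 t1) * ((t2 1 - t3 1) * (t2 1 - t3 1)) = 0 := by
          rw [dotp_eq, dotp_eq]
          linear_combination (-(t1 0) * ((t2 1 - t3 1) * (t2 1 - t3 1))) * E012 +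
            ((t2 1 - t3 1) * (t2 1 - t1 1) + (t2 2 - t3 2) * (t1 2)) * hA +
            (-(t1 2) * (t2 2 - t3 2)) * hB + (t1 2 * t2 2 - t1 2 * t1 2) * hS
        have := (mul_eq_zero.mp key).resolve_right (mul_ne_zero hD1 hD1)
        exact Hsq (sub_eq_zero.mp this)
      · exact kill2 N1 hw0 (by simp [E023]) H1 (perp_of_eq E23) hdet
    · -- δ is a non-dot color
      fin_cases iδ
      · exact L1.1 E012
      · have Lag := leaves_agree L1 L2
        have hd : dotp (t2 - t3) (p - r) = 0 := by
          rw [dotp_sub_left, H2, H3, sub_zero]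
        have hD2 : t2 2 - t3 2 ≠ 0 := by
          intro hz
          exact m23 (funext3 E023 ((Lag 1 (by decide)).symm ▸ rfl)
            (sub_eq_zero.mp hz))
        have h2z : (p - r) 2 = 0 := by
          rw [dotp_eq] at hd
          simp only [Pi.sub_apply] at hd
          have : (t2 2 - t3 2) * ((p - r) 2) = 0 := by
            simp only [Pi.sub_apply]
            linear_combination hd - (p 0 - r 0) * E023 - (p 1 - r 1) * (Lag 1 (by decide))
          exact (mul_eq_zero.mp this).resolve_left hD2
        have h1nz : (p - r) 1 ≠ 0 := by
          intro hz
          refine hpr (funext3 (AgPR 0 (by decide)) ?_ ?_)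
          · simpa [sub_eq_zero] using hz
          · simpa [sub_eq_zero] using h2z
        have : t1 1 * ((p - r) 1) = 0 := by
          rw [dotp_eq] at H1
          simp only [Pi.sub_apply] at H1 h2z ⊢
          linear_combination H1 - t1 0 * (by simpa [sub_eq_zero] using hw0 : p 0 = r 0)
            - t1 2 * (by simpa [sub_eq_zero] using h2z : p 2 = r 2)
        exact N1 1 ((mul_eq_zero.mp this).resolve_right h1nz)
      · exact m23 (funext3 (leaves_agree L1 L2 0 (by decide))
          (leaves_agree L1 L2 1 (by decide)) (leaves_agree L1 L2 2 (by decide)))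
  · exact subC N2 H2 (by simp [AgPR 0 (by decide)]) (by simp [AgPR 1 (by decide)])
      (sub_ne_zero.mpr hpr)
  · exact m12 (funext3 (Ag12 0 (by decide)) (Ag12 1 (by decide)) (Ag12 2 (by decide)))

end Pi
section PiMain

lemma PiLemma {p r t1 t2 t3 : Fin 3 → F} {β δC : Color 3 F}
    (Np : NZ p) (N1 : NZ t1) (N2 : NZ t2)
    (hpr : p ≠ r)
    (mp1 : p ≠ t1) (mp2 : p ≠ t2) (mp3 : p ≠ t3)
    (mr1 : r ≠ t1) (mr2 : r ≠ t2) (mr3 : r ≠ t3)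
    (m12 : t1 ≠ t2) (m13 : t1 ≠ t3) (m23 : t2 ≠ t3)
    (hp1 : phi p t1 = β) (hp2 : phi p t2 = β) (hp3 : phi p t3 = β)
    (hr1 : phi r t1 = β) (hr2 : phi r t2 = β) (hr3 : phi r t3 = β)
    (h12 : phi t1 t2 = δC) (h13 : phi t1 t3 = δC) : False := by
  cases β with
  | dot c =>
    obtain ⟨vp1, np1, _, _⟩ := phi_dot hp1
    obtain ⟨vp2, _, _, _⟩ := phi_dot hp2
    obtain ⟨vp3, _, _, _⟩ := phi_dot hp3
    obtain ⟨vr1, _, _, _⟩ := phi_dot hr1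
    obtain ⟨vr2, _, _, _⟩ := phi_dot hr2
    obtain ⟨vr3, _, _, _⟩ := phi_dot hr3
    have pd : dotp p (t2 - t3) = 0 := perp_of_eq (vp2.trans vp3.symm)
    have pg : dotp p (t1 - t2) = 0 := perp_of_eq (vp1.trans vp2.symm)
    have rd : dotp r (t2 - t3) = 0 := perp_of_eq (vr2.trans vr3.symm)
    have rg : dotp r (t1 - t2) = 0 := perp_of_eq (vr1.trans vr2.symm)
    by_cases hn0 : cp (t2 - t3) (t1 - t2) = 0
    · have c0 := congrFun hn0 0
      have c1 := congrFun hn0 1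
      have c2 := congrFun hn0 2
      rw [cp0] at c0; rw [cp1] at c1; rw [cp2] at c2
      simp only [Pi.zero_apply] at c0 c1 c2
      obtain ⟨s, hs⟩ := prop_of_cross_eq (x := t1 - t2) (n := t2 - t3)
        (by linear_combination -c2) (by linear_combination c1)
        (by linear_combination -c0) (sub_ne_zero.mpr m23)
      exact subA h12 h13 m12 m13 m23 ⟨s, hs⟩
    · obtain ⟨q01, q02, q12⟩ := perp_cp pd pg
      obtain ⟨r01, r02, r12⟩ := perp_cp rd rg
      obtain ⟨μ, hμ⟩ := prop_of_cross_eq q01 q02 q12 hn0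
      obtain ⟨ν, hν⟩ := prop_of_cross_eq r01 r02 r12 hn0
      set n := cp (t2 - t3) (t1 - t2)
      have hμ1 : μ * dotp n t1 = c.1 := by rw [← dotp_smul_left, ← hμ, vp1]
      have hν1 : ν * dotp n t1 = c.1 := by rw [← dotp_smul_left, ← hν, vr1]
      have hnt1 : dotp n t1 ≠ 0 := by
        intro hz
        rw [hz, mul_zero] at hμ1
        rw [← vp1] at hμ1
        exact np1 hμ1.symm
      have hμν : μ = ν := by
        have := hμ1.trans hν1.symm
        exact mul_right_cancel₀ hnt1 this
      exact hpr (by rw [hμ, hν, hμν])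
  | zero i a =>
    obtain ⟨z1, Np1⟩ := phi_zero mp1 hp1
    obtain ⟨z2, Np2⟩ := phi_zero mp2 hp2
    obtain ⟨z3, Np3⟩ := phi_zero mp3 hp3
    exact PiP Np (z1.trans z2.symm) (z1.trans z3.symm)
      (leaves_agree Np1 Np2) (leaves_agree Np1 Np3) h12 h13 m12 m13 m23
  | up i a =>
    obtain ⟨Np1, _, PU1, QU1⟩ := phi_up mp1 hp1
    obtain ⟨Np2, _, PU2, QU2⟩ := phi_up mp2 hp2
    obtain ⟨Np3, _, PU3, QU3⟩ := phi_up mp3 hp3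
    obtain ⟨Nr1, _, PV1, QV1⟩ := phi_up mr1 hr1
    obtain ⟨Nr2, _, PV2, QV2⟩ := phi_up mr2 hr2
    obtain ⟨Nr3, _, PV3, QV3⟩ := phi_up mr3 hr3
    have Ag12 := leaves_agree Np1 Np2
    have Ag13 := leaves_agree Np1 Np3
    have e2 : t2 i = t1 i := (Ag12 i le_rfl).symm
    have e3 : t3 i = t1 i := (Ag13 i le_rfl).symm
    have epr : p i = r i := by
      have h1 := Np1.2.2
      have h2 := Nr1.2.2
      have : p i + t1 i = r i + t1 i := by rw [h1, h2]
      exact add_right_cancel this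
    rcases lt_or_gt_of_ne Np1.1 with hlt | hgt
    · have u1 := PU1 hlt
      have u2 := PU2 (by rw [e2]; exact hlt)
      have u3 := PU3 (by rw [e3]; exact hlt)
      exact PiP Np (u1.trans u2.symm) (u1.trans u3.symm) Ag12 Ag13 h12 h13 m12 m13 m23
    · have q1p := QU1 hgt
      have q2p := QU2 (by rw [e2]; exact hgt)
      have q3p := QU3 (by rw [e3]; exact hgt)
      have q1r := QV1 (by rw [← epr]; exact hgt)
      have q2r := QV2 (by rw [e2, ← epr]; exact hgt)
      have q3r := QV3 (by rw [e3, ← epr]; exact hgt)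
      have AgPR : ∀ j, j ≤ i → p j = r j := by
        intro j hj
        rcases eq_or_lt_of_le hj with rfl | hjlt
        · exact epr
        · exact (Np1.2.1 j hjlt).trans (Nr1.2.1 j hjlt).symm
      exact PiQ N1 N2 hpr AgPR q1p q2p q3p q1r q2r q3r Ag12 Ag13 h12 h13 m12 m13 m23
  | down i a =>
    obtain ⟨Np1, _, QU1, PU1⟩ := phi_down mp1 hp1
    obtain ⟨Np2, _, QU2, PU2⟩ := phi_down mp2 hp2
    obtain ⟨Np3, _, QU3, PU3⟩ := phi_down mp3 hp3
    obtain ⟨Nr1, _, QV1, PV1⟩ := phi_down mr1 hr1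
    obtain ⟨Nr2, _, QV2, PV2⟩ := phi_down mr2 hr2
    obtain ⟨Nr3, _, QV3, PV3⟩ := phi_down mr3 hr3
    have Ag12 := leaves_agree Np1 Np2
    have Ag13 := leaves_agree Np1 Np3
    have e2 : t2 i = t1 i := (Ag12 i le_rfl).symm
    have e3 : t3 i = t1 i := (Ag13 i le_rfl).symm
    have epr : p i = r i := by
      have h1 := Np1.2.2
      have h2 := Nr1.2.2
      have : p i + t1 i = r i + t1 i := by rw [h1, h2]
      exact add_right_cancel this
    rcases lt_or_gt_of_ne Np1.1 with hlt | hgt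
    · have q1p := QU1 hlt
      have q2p := QU2 (by rw [e2]; exact hlt)
      have q3p := QU3 (by rw [e3]; exact hlt)
      have q1r := QV1 (by rw [← epr]; exact hlt)
      have q2r := QV2 (by rw [e2, ← epr]; exact hlt)
      have q3r := QV3 (by rw [e3, ← epr]; exact hlt)
      have AgPR : ∀ j, j ≤ i → p j = r j := by
        intro j hj
        rcases eq_or_lt_of_le hj with rfl | hjlt
        · exact epr
        · exact (Np1.2.1 j hjlt).trans (Nr1.2.1 j hjlt).symm
      exact PiQ N1 N2 hpr AgPR q1p q2p q3p q1r q2r q3r Ag12 Ag13 h12 h13 m12 m13 m23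
    · have u1 := PU1 hgt
      have u2 := PU2 (by rw [e2]; exact hgt)
      have u3 := PU3 (by rw [e3]; exact hgt)
      exact PiP Np (u1.trans u2.symm) (u1.trans u3.symm) Ag12 Ag13 h12 h13 m12 m13 m23

end PiMain
section Reduction

lemma leftover_nonempty {V C : Type} [DecidableEq V] {f : V → V → C} {S : Finset V}
    (h : Leftover f S) : S.Nonempty := by
  induction h with
  | single v => exact ⟨v, Finset.mem_singleton_self v⟩
  | split A B α hA hB hdisj hcolors hcross hαA hαB ihA ihB =>
    obtain ⟨a, ha⟩ := ihA
    exact ⟨a, Finset.mem_union_left _ ha⟩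

/-- Any leftover set of size `≥ 3` contains a monochromatic cherry. -/
lemma leftover_cherry {V C : Type} [DecidableEq V] {f : V → V → C} {T : Finset V}
    (h : Leftover f T) (hcard : 3 ≤ T.card) :
    ∃ x ∈ T, ∃ y ∈ T, ∃ z ∈ T, x ≠ y ∧ x ≠ z ∧ y ≠ z ∧ f x y = f x z := by
  cases h with
  | single v => simp at hcard
  | split A B α hA hB hdisj hcolors hcross hαA hαB =>
    have hc : (A ∪ B).card = A.card + B.card := Finset.card_union_of_disjoint hdisj
    by_cases h2 : 2 ≤ A.card
    · obtain ⟨y, hy, z, hz, hyz⟩ := Finset.one_lt_card.mp h2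
      obtain ⟨x, hx⟩ := leftover_nonempty hB
      have hxy : x ≠ y := fun he => (Finset.disjoint_left.mp hdisj hy) (he ▸ hx)
      have hxz : x ≠ z := fun he => (Finset.disjoint_left.mp hdisj hz) (he ▸ hx)
      exact ⟨x, Finset.mem_union_right _ hx, y, Finset.mem_union_left _ hy,
        z, Finset.mem_union_left _ hz, hxy, hxz, hyz,
        by rw [(hcross y hy x hx).2, (hcross z hz x hx).2]⟩
    · have h1A : 1 ≤ A.card := Finset.card_pos.mpr (leftover_nonempty hA)
      have h2B : 2 ≤ B.card := by rw [hc] at hcard; omega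
      obtain ⟨y, hy, z, hz, hyz⟩ := Finset.one_lt_card.mp h2B
      obtain ⟨x, hx⟩ := leftover_nonempty hA
      have hxy : x ≠ y := fun he => (Finset.disjoint_left.mp hdisj hx) (he ▸ hy)
      have hxz : x ≠ z := fun he => (Finset.disjoint_left.mp hdisj hx) (he ▸ hz)
      exact ⟨x, Finset.mem_union_left _ hx, y, Finset.mem_union_right _ hy,
        z, Finset.mem_union_right _ hz, hxy, hxz, hyz,
        by rw [(hcross x hx y hy).1, (hcross x hx z hz).1]⟩

/-- Pair side + cherry side gives a contradiction. -/
lemma PiW {P T : Finset (Fin 3 → F)} {α : Color 3 F}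
    (hT : Leftover phi T) (h2 : 2 ≤ P.card) (h3 : 3 ≤ T.card)
    (hdisj : ∀ p ∈ P, ∀ t ∈ T, p ≠ t)
    (hcr : ∀ p ∈ P, ∀ t ∈ T, phi p t = α)
    (NZP : ∀ x ∈ P, NZ x) (NZT : ∀ x ∈ T, NZ x) : False := by
  obtain ⟨p, hp, r, hr, hpr⟩ := Finset.one_lt_card.mp h2
  obtain ⟨x, hx, y, hy, z, hz, hxy, hxz, hyz, hcherry⟩ := leftover_cherry hT h3
  exact PiLemma (NZP p hp) (NZT x hx) (NZT y hy) hpr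
    (hdisj p hp x hx) (hdisj p hp y hy) (hdisj p hp z hz)
    (hdisj r hr x hx) (hdisj r hr y hy) (hdisj r hr z hz)
    hxy hxz hyz
    (hcr p hp x hx) (hcr p hp y hy) (hcr p hp z hz)
    (hcr r hr x hx) (hcr r hr y hy) (hcr r hr z hz)
    rfl hcherry.symm

/-- Apex + 5-element leftover set gives a contradiction. -/
lemma K5W {v : Fin 3 → F} {B : Finset (Fin 3 → F)} {α : Color 3 F}
    (hB : Leftover phi B) (hcard5 : B.card = 5)
    (hvB : ∀ b ∈ B, v ≠ b)
    (hcr : ∀ b ∈ B, phi v b = α)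
    (NZv : NZ v) (NZB : ∀ b ∈ B, NZ b) : False := by
  cases hB with
  | single w => simp at hcard5
  | split C D β hC hD hdisj hcolors hcross hαA hαB =>
    have hc : (C ∪ D).card = C.card + D.card := Finset.card_union_of_disjoint hdisj
    rw [hc] at hcard5
    by_cases h3 : 3 ≤ C.card
    · obtain ⟨w, hw⟩ := leftover_nonempty hD
      obtain ⟨x, hx, y, hy, z, hz, hxy, hxz, hyz, hcherry⟩ := leftover_cherry hC h3
      have hwC : ∀ t ∈ C, w ≠ t := fun t ht he =>
        (Finset.disjoint_left.mp hdisj ht) (he ▸ hw)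
      have memC : ∀ t ∈ C, t ∈ C ∪ D := fun t ht => Finset.mem_union_left _ ht
      have hwB : w ∈ C ∪ D := Finset.mem_union_right _ hw
      exact K5 (s1 := y) (s2 := z) (s3 := x) (s4 := w) (s5 := v)
        (NZB x (memC x hx)) (NZB w hwB) NZv
        hyz hxy hxz (hwC y hy) (hwC z hz) (hwC x hx)
        (hvB y (memC y hy)) (hvB z (memC z hz)) (hvB x (memC x hx)) (hvB w hwB)
        (hcr y (memC y hy)) (hcr z (memC z hz)) (hcr x (memC x hx)) (hcr w hwB)
        ((hcross y hy w hw).2) ((hcross z hz w hw).2) ((hcross x hx w hw).2)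
        rfl hcherry.symm
    · have h3D : 3 ≤ D.card := by
        have h1C : 1 ≤ C.card := Finset.card_pos.mpr (leftover_nonempty hC)
        omega
      obtain ⟨w, hw⟩ := leftover_nonempty hC
      obtain ⟨x, hx, y, hy, z, hz, hxy, hxz, hyz, hcherry⟩ := leftover_cherry hD h3D
      have hwD : ∀ t ∈ D, w ≠ t := fun t ht he =>
        (Finset.disjoint_right.mp hdisj ht) (he ▸ hw)
      have memD : ∀ t ∈ D, t ∈ C ∪ D := fun t ht => Finset.mem_union_right _ ht
      have hwB : w ∈ C ∪ D := Finset.mem_union_left _ hw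
      exact K5 (s1 := y) (s2 := z) (s3 := x) (s4 := w) (s5 := v)
        (NZB x (memD x hx)) (NZB w hwB) NZv
        hyz hxy hxz (hwD y hy) (hwD z hz) (hwD x hx)
        (hvB y (memD y hy)) (hvB z (memD z hz)) (hvB x (memD x hx)) (hvB w hwB)
        (hcr y (memD y hy)) (hcr z (memD z hz)) (hcr x (memD x hx)) (hcr w hwB)
        ((hcross w hw y hy).1) ((hcross w hw z hz).1) ((hcross w hw x hx).1)
        rfl hcherry.symm

end Reduction

theorem no_leftover_six' (S : Finset (Fin 3 → F)) (hSnz : ∀ x ∈ S, NZ x)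
    (hcard : S.card = 6) : ¬ Leftover phi S := by
  intro h
  cases h with
  | single v => simp at hcard
  | split A B α hA hB hdisj hcolors hcross hαA hαB =>
    have hc : (A ∪ B).card = A.card + B.card := Finset.card_union_of_disjoint hdisj
    rw [hc] at hcard
    have h1A : 1 ≤ A.card := Finset.card_pos.mpr (leftover_nonempty hA)
    have h1B : 1 ≤ B.card := Finset.card_pos.mpr (leftover_nonempty hB)
    have memA : ∀ t ∈ A, t ∈ A ∪ B := fun t ht => Finset.mem_union_left _ ht
    have memB : ∀ t ∈ B, t ∈ A ∪ B := fun t ht => Finset.mem_union_right _ ht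
    by_cases hA1 : A.card = 1
    · obtain ⟨v, hv⟩ := Finset.card_eq_one.mp hA1
      have hvA : v ∈ A := by rw [hv]; exact Finset.mem_singleton_self v
      exact K5W hB (by omega)
        (fun b hb he => (Finset.disjoint_left.mp hdisj hvA) (by rw [he]; exact hb))
        (fun b hb => (hcross v hvA b hb).1)
        (hSnz v (memA v hvA)) (fun b hb => hSnz b (memB b hb))
    · by_cases hB1 : B.card = 1
      · obtain ⟨v, hv⟩ := Finset.card_eq_one.mp hB1
        have hvB : v ∈ B := by rw [hv]; exact Finset.mem_singleton_self v
        exact K5W hA (by omega)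
          (fun a ha he => (Finset.disjoint_right.mp hdisj hvB) (by rw [he]; exact ha))
          (fun a ha => (hcross a ha v hvB).2)
          (hSnz v (memB v hvB)) (fun a ha => hSnz a (memA a ha))
      · by_cases h3B : 3 ≤ B.card
        · exact PiW (α := α) hB (by omega) h3B
            (fun p hp t ht he => (Finset.disjoint_left.mp hdisj hp) (by rw [he]; exact ht))
            (fun p hp t ht => (hcross p hp t ht).1)
            (fun x hx => hSnz x (memA x hx)) (fun x hx => hSnz x (memB x hx))
        · exact PiW (α := α) hA (by omega) (by omega)
            (fun p hp t ht he => (Finset.disjoint_right.mp hdisj hp) (by rw [he]; exact ht))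
            (fun p hp t ht => (hcross t ht p hp).2)
            (fun x hx => hSnz x (memB x hx)) (fun x hx => hSnz x (memA x hx))

/-- No set of 6 vectors in `(𝔽_q*)³` has a leftover structure under `φ₃`. -/
theorem no_leftover_six (hodd : Odd (Fintype.card F))
    (S : Finset (Fin 3 → F)) (hSnz : ∀ x ∈ S, NZ x) (hcard : S.card = 6) :
    ¬ Leftover phi S := by
  exact no_leftover_six' S hSnz hcard

end EG
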